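/- Main decentralized surrogate theorem: for product joint policies π_old, π_new in a finite Dec-POMDP with full observability, J(π_new) − J(π_old) ≥ (1/N) Σᵢ 𝓛ⁱ_{π_old}(πⁱ_new) − M̃ Σᵢ √(Dᵢ) − C Σᵢ Dᵢ, where Dᵢ = max_s D_KL(πⁱ_old(·|s) ‖ πⁱ_new(·|s)), M̃ = 2 max_{s,a}|A_old(s,a)| / (1−γ), and C = 4γ max_{s,a}|A_old(s,a)| / (1−γ)². -/

import Mathlib

/-!
KL divergence is additive on product distributions, so the maximal joint KL divergence in the
TRPO bound is at most `∑ᵢ Dᵢ`. The individual surrogate of agent `i` is the joint surrogate of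
the hybrid policy `πⁱ_new × π⁻ⁱ_old`, which differs from `π_new` only in the factors `j ≠ i`.
Replacing factors one at a time bounds the L¹ distance between two product distributions by the
sum of the L¹ distances of the factors, and each of these is at most `2 √Dⱼ` by a Pinsker-type
inequality obtained through the Hellinger distance. As `|A_old| ≤ M` and `ρ` has mass
`1 / (1 - γ)`, every individual surrogate exceeds the joint one by at most
`2M / (1 - γ) · ∑ⱼ √Dⱼ`, and averaging over the agents gives the bound.
-/

/-- KL divergence of probability mass functions on a finite set, with convention 0·log 0 = 0. -/
noncomputable def klDiv {A : Type*} [Fintype A] (p q : A → ℝ) : ℝ :=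
  ∑ a, if p a = 0 then 0 else p a * Real.log (p a / q a)

open Finset Function

lemma sq_sqrt_sub_sqrt_le_mul_log_div_add_sub {x y : ℝ} (hx : 0 ≤ x) (hy : 0 ≤ y)
    (hxy : 0 < x → 0 < y) : (√x - √y) ^ 2 ≤ x * Real.log (x / y) + y - x := by
  rcases hx.eq_or_lt with rfl | hx
  · simp [Real.sq_sqrt hy]
  have hu : 0 < √x := Real.sqrt_pos.2 hx
  have hv : 0 < √y := Real.sqrt_pos.2 (hxy hx)
  have hlog : 1 - √y / √x ≤ Real.log (√x / √y) := by
    simpa using Real.one_sub_inv_le_log_of_pos (div_pos hu hv)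
  have hsq : Real.log (x / y) = 2 * Real.log (√x / √y) := by
    rw [← Real.sq_sqrt hx.le, ← Real.sq_sqrt hy, ← div_pow, Real.log_pow, Real.sqrt_sq hu.le,
      Real.sqrt_sq hv.le]
    norm_num
  have hxlog : x - √x * √y ≤ x * Real.log (√x / √y) :=
    calc x - √x * √y = x * (1 - √y / √x) := by
          field_simp; linear_combination -√y * Real.sq_sqrt hx.le
      _ ≤ x * Real.log (√x / √y) := mul_le_mul_of_nonneg_left hlog hx.le
  rw [hsq]
  nlinarith [Real.sq_sqrt hx.le, Real.sq_sqrt hy]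

section Distribution

variable {α : Type*} [Fintype α]

lemma klDiv_eq_sum_mul_log (p q : α → ℝ) :
    klDiv p q = ∑ a, p a * Real.log (p a / q a) := by
  refine sum_congr rfl fun a _ => ?_
  split_ifs with h
  · simp [h]
  · rfl

lemma sum_sq_sqrt_sub_sqrt_le_klDiv {p q : α → ℝ} (hp0 : ∀ a, 0 ≤ p a)
    (hq0 : ∀ a, 0 ≤ q a) (hp1 : ∑ a, p a = 1) (hq1 : ∑ a, q a = 1) (hpq : ∀ a, 0 < p a → 0 < q a) :
    ∑ a, (√(p a) - √(q a)) ^ 2 ≤ klDiv p q := by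
  calc ∑ a, (√(p a) - √(q a)) ^ 2 ≤ ∑ a, (p a * Real.log (p a / q a) + q a - p a) :=
        sum_le_sum fun a _ => sq_sqrt_sub_sqrt_le_mul_log_div_add_sub (hp0 a) (hq0 a) (hpq a)
    _ = klDiv p q := by
        rw [sum_sub_distrib, sum_add_distrib, hp1, hq1, klDiv_eq_sum_mul_log]; ring

lemma sum_abs_sub_le_two_mul_sqrt_klDiv {p q : α → ℝ} (hp0 : ∀ a, 0 ≤ p a)
    (hq0 : ∀ a, 0 ≤ q a) (hp1 : ∑ a, p a = 1) (hq1 : ∑ a, q a = 1)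
    (hpq : ∀ a, 0 < p a → 0 < q a) :
    ∑ a, |p a - q a| ≤ 2 * √(klDiv p q) := by
  set H := ∑ a, (√(p a) - √(q a)) ^ 2
  have hH : H ≤ klDiv p q := sum_sq_sqrt_sub_sqrt_le_klDiv hp0 hq0 hp1 hq1 hpq
  have hH0 : 0 ≤ H := sum_nonneg fun a _ => sq_nonneg _
  have hplus : ∑ a, (√(p a) + √(q a)) ^ 2 = 4 - H := by
    have h : ∀ a, (√(p a) + √(q a)) ^ 2 = 2 * (p a + q a) - (√(p a) - √(q a)) ^ 2 :=
      fun a => by nlinarith [Real.sq_sqrt (hp0 a), Real.sq_sqrt (hq0 a)]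
    rw [sum_congr rfl fun a _ => h a, sum_sub_distrib, ← mul_sum, sum_add_distrib, hp1, hq1]
    ring
  have hfactor : ∀ a, |p a - q a| = |√(p a) - √(q a)| * (√(p a) + √(q a)) := fun a => by
    rw [← abs_of_nonneg (by positivity : 0 ≤ √(p a) + √(q a)), ← abs_mul]
    congr 1
    linear_combination -Real.sq_sqrt (hp0 a) + Real.sq_sqrt (hq0 a)
  have hsq : (∑ a, |p a - q a|) ^ 2 ≤ 4 * klDiv p q := by
    calc (∑ a, |p a - q a|) ^ 2
        ≤ (∑ a, |√(p a) - √(q a)| ^ 2) * ∑ a, (√(p a) + √(q a)) ^ 2 := by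
          simp_rw [hfactor]; exact sum_mul_sq_le_sq_mul_sq _ _ _
      _ = H * (4 - H) := by simp only [sq_abs, hplus, H]
      _ ≤ 4 * klDiv p q := by nlinarith
  calc ∑ a, |p a - q a| ≤ √(4 * klDiv p q) := (le_abs_self _).trans (Real.abs_le_sqrt hsq)
    _ = 2 * √(klDiv p q) := by
        rw [Real.sqrt_mul (by norm_num), show (4 : ℝ) = 2 ^ 2 by norm_num,
          Real.sqrt_sq (by norm_num)]

lemma sum_mul_sub_sum_mul_le (p q f : α → ℝ) {M : ℝ} (hf : ∀ a, |f a| ≤ M) :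
    ∑ a, p a * f a - ∑ a, q a * f a ≤ M * ∑ a, |p a - q a| := by
  rw [← sum_sub_distrib, mul_sum]
  refine sum_le_sum fun a _ => ?_
  calc p a * f a - q a * f a ≤ |(p a - q a) * f a| := by rw [sub_mul]; exact le_abs_self _
    _ = |p a - q a| * |f a| := abs_mul _ _
    _ ≤ M * |p a - q a| := by
        rw [mul_comm]; exact mul_le_mul_of_nonneg_right (hf a) (abs_nonneg _)

end Distribution

section Product

variable {ι : Type*} [Fintype ι] [DecidableEq ι] {A : ι → Type*}

lemma prod_update_apply (p : ∀ j, A j → ℝ) (i : ι) (f : A i → ℝ) (a : ∀ j, A j) :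
    ∏ j, update p i f j (a j) = f (a i) * ∏ j ∈ univ.erase i, p j (a j) := by
  rw [← mul_prod_erase univ _ (mem_univ i), update_self]
  congr 1
  exact prod_congr rfl fun j hj => by rw [update_of_ne (ne_of_mem_erase hj)]

lemma mul_log_div_prod_eq_sum {p q : ∀ j, A j → ℝ} (hp0 : ∀ j b, 0 ≤ p j b)
    (hpq : ∀ j b, 0 < p j b → 0 < q j b) (a : ∀ j, A j) :
    (∏ j, p j (a j)) * Real.log ((∏ j, p j (a j)) / ∏ j, q j (a j)) =
      ∑ i, p i (a i) * Real.log (p i (a i) / q i (a i)) * ∏ j ∈ univ.erase i, p j (a j) := by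
  by_cases hzero : ∃ k, p k (a k) = 0
  · obtain ⟨k, hk0⟩ := hzero
    rw [prod_eq_zero (mem_univ k) hk0, zero_mul]
    refine (sum_eq_zero fun i _ => ?_).symm
    rcases eq_or_ne i k with rfl | hik
    · simp [hk0]
    · rw [prod_eq_zero (mem_erase.2 ⟨hik.symm, mem_univ k⟩) hk0, mul_zero]
  · have hall : ∀ j, 0 < p j (a j) := fun j => (hp0 j _).lt_of_ne' (not_exists.mp hzero j)
    rw [← prod_div_distrib, Real.log_prod fun j _ => (div_pos (hall j) (hpq j _ (hall j))).ne',
      mul_sum]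
    refine sum_congr rfl fun i _ => ?_
    rw [← mul_prod_erase univ (fun j => p j (a j)) (mem_univ i)]
    ring

variable [∀ i, Fintype (A i)]

lemma sum_mul_prod_erase_eq_sum {p : ∀ j, A j → ℝ} {i : ι}
    (hp1 : ∀ j ≠ i, ∑ b, p j b = 1) (f : A i → ℝ) :
    ∑ a : ∀ j, A j, f (a i) * ∏ j ∈ univ.erase i, p j (a j) = ∑ b, f b := by
  simp_rw [← prod_update_apply, ← Fintype.prod_sum, ← mul_prod_erase univ _ (mem_univ i),
    update_self]
  rw [prod_eq_one fun j hj => by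
    rw [update_of_ne (ne_of_mem_erase hj), hp1 j (ne_of_mem_erase hj)], mul_one]

lemma klDiv_pi {p q : ∀ j, A j → ℝ} (hp0 : ∀ j b, 0 ≤ p j b)
    (hp1 : ∀ j, ∑ b, p j b = 1) (hpq : ∀ j b, 0 < p j b → 0 < q j b) :
    klDiv (fun a : ∀ j, A j => ∏ j, p j (a j)) (fun a => ∏ j, q j (a j)) =
      ∑ i, klDiv (p i) (q i) := by
  simp_rw [klDiv_eq_sum_mul_log, mul_log_div_prod_eq_sum hp0 hpq]
  rw [sum_comm]
  exact sum_congr rfl fun i _ =>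
    sum_mul_prod_erase_eq_sum (fun j _ => hp1 j) (fun b => p i b * Real.log (p i b / q i b))

lemma sum_abs_prod_update_sub_prod {r : ∀ j, A j → ℝ} (hr0 : ∀ j b, 0 ≤ r j b)
    (hr1 : ∀ j, ∑ b, r j b = 1) (k : ι) (f : A k → ℝ) :
    ∑ a : ∀ j, A j, |∏ j, update r k f j (a j) - ∏ j, r j (a j)| =
      ∑ b, |f b - r k b| := by
  have h : ∀ a : ∀ j, A j, |∏ j, update r k f j (a j) - ∏ j, r j (a j)| =
      |f (a k) - r k (a k)| * ∏ j ∈ univ.erase k, r j (a j) := fun a => by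
    rw [prod_update_apply, ← mul_prod_erase univ _ (mem_univ k), ← sub_mul, abs_mul,
      abs_of_nonneg (prod_nonneg fun j _ => hr0 j _)]
  simp_rw [h]
  exact sum_mul_prod_erase_eq_sum (fun j _ => hr1 j) (fun b => |f b - r k b|)

lemma sum_abs_prod_sub_prod_le {p q : ∀ j, A j → ℝ} (hp0 : ∀ j b, 0 ≤ p j b)
    (hq0 : ∀ j b, 0 ≤ q j b) (hp1 : ∀ j, ∑ b, p j b = 1) (hq1 : ∀ j, ∑ b, q j b = 1) :
    ∑ a : ∀ j, A j, |∏ j, p j (a j) - ∏ j, q j (a j)| ≤ ∑ j, ∑ b, |p j b - q j b| := by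
  suffices h : ∀ t : Finset ι,
      ∑ a : ∀ j, A j, |∏ j, t.piecewise p q j (a j) - ∏ j, q j (a j)| ≤
        ∑ j ∈ t, ∑ b, |p j b - q j b| by
    simpa using h univ
  intro t
  induction t using Finset.induction_on with
  | empty => simp
  | @insert k t hk ih =>
    set r := t.piecewise p q
    have hr0 : ∀ j b, 0 ≤ r j b := fun j b =>
      t.piecewise_cases p q (fun r => 0 ≤ r b) (hp0 j b) (hq0 j b)
    have hr1 : ∀ j, ∑ b, r j b = 1 := fun j =>
      t.piecewise_cases p q (fun r => ∑ b, r b = 1) (hp1 j) (hq1 j)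
    have hrk : r k = q k := t.piecewise_eq_of_notMem p q hk
    rw [piecewise_insert, sum_insert hk]
    calc ∑ a : ∀ j, A j, |∏ j, update r k (p k) j (a j) - ∏ j, q j (a j)|
        ≤ ∑ a : ∀ j, A j, (|∏ j, update r k (p k) j (a j) - ∏ j, r j (a j)| +
            |∏ j, r j (a j) - ∏ j, q j (a j)|) := sum_le_sum fun a _ => abs_sub_le _ _ _
      _ ≤ ∑ b, |p k b - q k b| + ∑ j ∈ t, ∑ b, |p j b - q j b| := by
        rw [sum_add_distrib, sum_abs_prod_update_sub_prod hr0 hr1, hrk]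
        exact add_le_add le_rfl ih

lemma sum_abs_mul_prod_erase_sub_prod_le {p q : ∀ j, A j → ℝ} (hp0 : ∀ j b, 0 ≤ p j b)
    (hq0 : ∀ j b, 0 ≤ q j b) (hp1 : ∀ j, ∑ b, p j b = 1) (hq1 : ∀ j, ∑ b, q j b = 1)
    (hpq : ∀ j b, 0 < p j b → 0 < q j b) (i : ι) :
    ∑ a : ∀ j, A j, |q i (a i) * ∏ j ∈ univ.erase i, p j (a j) - ∏ j, q j (a j)| ≤
      2 * ∑ j, √(klDiv (p j) (q j)) := by
  simp_rw [← prod_update_apply p i (q i)]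
  have hr0 : ∀ j b, 0 ≤ update p i (q i) j b :=
    (forall_update_iff p fun j r => ∀ b, 0 ≤ r b).2 ⟨hq0 i, fun j _ => hp0 j⟩
  have hr1 : ∀ j, ∑ b, update p i (q i) j b = 1 :=
    (forall_update_iff p fun j r => ∑ b, r b = 1).2 ⟨hq1 i, fun j _ => hp1 j⟩
  refine (sum_abs_prod_sub_prod_le hr0 hq0 hr1 hq1).trans ?_
  rw [mul_sum]
  refine sum_le_sum fun j _ => ?_
  rcases eq_or_ne j i with rfl | hji
  · simp only [update_self, sub_self, abs_zero, sum_const_zero]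
    positivity
  · rw [update_of_ne hji]
    exact sum_abs_sub_le_two_mul_sqrt_klDiv (hp0 j) (hq0 j) (hp1 j) (hq1 j) (hpq j)

end Product

/-- The paper's `𝓛_{π_old}(π)`, with `ρ = ρ_old` and `Adv = A_old`. -/
noncomputable def surrogate {S α : Type*} [Fintype S] [Fintype α] (ρ : S → ℝ)
    (Adv : S → α → ℝ) (π : S → α → ℝ) : ℝ :=
  ∑ s, ρ s * ∑ a, π s a * Adv s a

lemma surrogate_sub_surrogate_le {S α : Type*} [Fintype S] [Fintype α] {ρ : S → ℝ}
    {Adv : S → α → ℝ} {M c : ℝ} (hρ0 : ∀ s, 0 ≤ ρ s) (hAdv : ∀ s a, |Adv s a| ≤ M)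
    (hM0 : 0 ≤ M) {π π' : S → α → ℝ} (hππ' : ∀ s, ∑ a, |π s a - π' s a| ≤ c) :
    surrogate ρ Adv π - surrogate ρ Adv π' ≤ (∑ s, ρ s) * (M * c) := by
  rw [surrogate, surrogate, ← sum_sub_distrib, sum_mul]
  refine sum_le_sum fun s _ => ?_
  rw [← mul_sub]
  exact mul_le_mul_of_nonneg_left ((sum_mul_sub_sum_mul_le _ _ _ (hAdv s)).trans
    (mul_le_mul_of_nonneg_left (hππ' s) hM0)) (hρ0 s)

theorem decentralized_surrogate_bound_general
    {S : Type*} [Fintype S] [Nonempty S]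
    {N : ℕ} (hN : 0 < N) (A : Fin N → Type*) [∀ i, Fintype (A i)]
    (γ M : ℝ) (hγ0 : 0 ≤ γ) (hM0 : 0 ≤ M)
    -- old and new individual policies (joint policies are their products)
    (πold πnew : ∀ i, S → A i → ℝ)
    (hold0 : ∀ i s a, 0 ≤ πold i s a) (hold1 : ∀ i s, ∑ a, πold i s a = 1)
    (hnew0 : ∀ i s a, 0 ≤ πnew i s a) (hnew1 : ∀ i s, ∑ a, πnew i s a = 1)
    (hpos : ∀ i s a, 0 < πold i s a → 0 < πnew i s a)
    -- discounted state distribution of the old joint policy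
    (ρ : S → ℝ) (hρ0 : ∀ s, 0 ≤ ρ s) (hρ1 : ∑ s, ρ s = 1 / (1 - γ))
    -- advantage of the old joint policy, with M = max |A_old|
    (Adv : S → (∀ i, A i) → ℝ) (hAdv : ∀ s a, |Adv s a| ≤ M)
    -- expected returns of the new and old joint policies
    (Jnew Jold : ℝ)
    -- the TRPO lower bound (Schulman et al. 2015), assumed
    (hTRPO : Jnew - Jold ≥
      (∑ s, ρ s * ∑ a : ∀ i, A i, (∏ i, πnew i s (a i)) * Adv s a)
        - (4 * γ * M / (1 - γ) ^ 2) *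
            ⨆ s : S, klDiv (fun a : ∀ i, A i => ∏ i, πold i s (a i))
              (fun a : ∀ i, A i => ∏ i, πnew i s (a i))) :
    Jnew - Jold ≥
      (1 / (N : ℝ)) * ∑ i, (∑ s, ρ s * ∑ a : ∀ j, A j,
          (πnew i s (a i) * ∏ j ∈ Finset.univ.erase i, πold j s (a j)) * Adv s a)
        - (2 * M / (1 - γ)) * ∑ i, Real.sqrt (⨆ s : S, klDiv (πold i s) (πnew i s))
        - (4 * γ * M / (1 - γ) ^ 2) * ∑ i, ⨆ s : S, klDiv (πold i s) (πnew i s) := by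
  set D : Fin N → ℝ := fun i => ⨆ s : S, klDiv (πold i s) (πnew i s)
  set P := 2 * M / (1 - γ) * ∑ j, √(D j)
  have hkl_le : ∀ i s, klDiv (πold i s) (πnew i s) ≤ D i := fun i s =>
    le_ciSup (f := fun s => klDiv (πold i s) (πnew i s)) (Set.finite_range _).bddAbove s
  have hjoint : (⨆ s : S, klDiv (fun a : ∀ i, A i => ∏ i, πold i s (a i))
      (fun a : ∀ i, A i => ∏ i, πnew i s (a i))) ≤ ∑ i, D i := ciSup_le fun s => by
    rw [klDiv_pi (fun i => hold0 i s) (fun i => hold1 i s) (fun i => hpos i s)]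
    exact sum_le_sum fun i _ => hkl_le i s
  have hagent : ∀ i, surrogate ρ Adv
      (fun s a => πnew i s (a i) * ∏ j ∈ univ.erase i, πold j s (a j)) ≤
        surrogate ρ Adv (fun s a => ∏ j, πnew j s (a j)) + P := fun i => by
    have h := surrogate_sub_surrogate_le hρ0 hAdv hM0 (c := 2 * ∑ j, √(D j)) fun s =>
      (sum_abs_mul_prod_erase_sub_prod_le (hold0 · s) (hnew0 · s) (hold1 · s) (hnew1 · s)
        (hpos · s) i).trans (by gcongr with j; exact hkl_le j s)
    rw [hρ1] at h
    linarith [show 1 / (1 - γ) * (M * (2 * ∑ j, √(D j))) = P by ring]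
  have havg : (1 / (N : ℝ)) * ∑ i, surrogate ρ Adv
      (fun s a => πnew i s (a i) * ∏ j ∈ univ.erase i, πold j s (a j)) ≤
        surrogate ρ Adv (fun s a => ∏ j, πnew j s (a j)) + P := by
    rw [one_div, inv_mul_le_iff₀ (by exact_mod_cast hN)]
    simpa [mul_add] using sum_le_sum fun i (_ : i ∈ univ) => hagent i
  have hC : 0 ≤ 4 * γ * M / (1 - γ) ^ 2 := by positivity
  simp only [surrogate] at havg
  linarith [mul_le_mul_of_nonneg_left hjoint hC]

/-- the main decentralized surrogate theorem. Assuming the (joint) TRPO lower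
bound, the joint policy improvement is lower bounded by the average of the individual
surrogates minus penalty terms involving only individual maximal KL divergences. -/
theorem decentralized_surrogate_bound
    {S : Type*} [Fintype S] [Nonempty S]
    {N : ℕ} (hN : 0 < N) (A : Fin N → Type*) [∀ i, Fintype (A i)]
    (γ M : ℝ) (hγ0 : 0 ≤ γ) (hγ1 : γ < 1) (hM0 : 0 ≤ M)
    -- old and new individual policies (joint policies are their products)
    (πold πnew : ∀ i, S → A i → ℝ)
    (hold0 : ∀ i s a, 0 ≤ πold i s a) (hold1 : ∀ i s, ∑ a, πold i s a = 1)
    (hnew0 : ∀ i s a, 0 ≤ πnew i s a) (hnew1 : ∀ i s, ∑ a, πnew i s a = 1)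
    (hpos : ∀ i s a, 0 < πold i s a → 0 < πnew i s a)
    -- discounted state distribution of the old joint policy
    (ρ : S → ℝ) (hρ0 : ∀ s, 0 ≤ ρ s) (hρ1 : ∑ s, ρ s = 1 / (1 - γ))
    -- advantage of the old joint policy, with M = max |A_old|
    (Adv : S → (∀ i, A i) → ℝ) (hAdv : ∀ s a, |Adv s a| ≤ M)
    -- expected returns of the new and old joint policies
    (Jnew Jold : ℝ)
    -- the TRPO lower bound (Schulman et al. 2015), assumed
    (hTRPO : Jnew - Jold ≥
      (∑ s, ρ s * ∑ a : ∀ i, A i, (∏ i, πnew i s (a i)) * Adv s a)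
        - (4 * γ * M / (1 - γ) ^ 2) *
            ⨆ s : S, klDiv (fun a : ∀ i, A i => ∏ i, πold i s (a i))
              (fun a : ∀ i, A i => ∏ i, πnew i s (a i))) :
    Jnew - Jold ≥
      (1 / (N : ℝ)) * ∑ i, (∑ s, ρ s * ∑ a : ∀ j, A j,
          (πnew i s (a i) * ∏ j ∈ Finset.univ.erase i, πold j s (a j)) * Adv s a)
        - (2 * M / (1 - γ)) * ∑ i, Real.sqrt (⨆ s : S, klDiv (πold i s) (πnew i s))
        - (4 * γ * M / (1 - γ) ^ 2) * ∑ i, ⨆ s : S, klDiv (πold i s) (πnew i s) :=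
  decentralized_surrogate_bound_general hN A γ M hγ0 hM0 πold πnew hold0 hold1 hnew0 hnew1 hpos ρ
    hρ0 hρ1 Adv hAdv Jnew Jold hTRPO
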